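/- k-Abelian equivalence is a congruence: if u₁ ∼_k v₁ and u₂ ∼_k v₂, then u₁u₂ ∼_k v₁v₂. -/
import Mathlib


/-- Number of occurrences of `x` as a factor of `w`. -/
def occ {A : Type*} [DecidableEq A] (w x : List A) : ℕ :=
  ((List.range (w.length + 1)).filter (fun i => decide (x <+: w.drop i))).length

/-- `k`-Abelian equivalence. -/
def KAbEq {A : Type*} [DecidableEq A] (k : ℕ) (u v : List A) : Prop :=
  ∀ x : List A, x ≠ [] → x.length ≤ k → occ u x = occ v x

section Aux

set_option linter.unusedSectionVars false
set_option linter.unusedVariables false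

variable {A : Type*} [DecidableEq A]

lemma occ_eq_countP (w x : List A) :
    occ w x = (List.range (w.length + 1)).countP (fun i => decide (x <+: w.drop i)) := by
  rw [occ, List.countP_eq_length_filter]

lemma occ_nil (x : List A) (hx : x ≠ []) : occ ([] : List A) x = 0 := by
  rw [occ_eq_countP]
  simp [List.countP_cons, hx, List.prefix_nil]

lemma occ_cons (b : A) (w x : List A) :
    occ (b :: w) x = (if x <+: b :: w then 1 else 0) + occ w x := by
  rw [occ_eq_countP, occ_eq_countP]
  rw [show (b :: w).length + 1 = (w.length + 1) + 1 from rfl, List.range_succ_eq_map]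
  rw [List.countP_cons, List.countP_map]
  simp only [List.drop_zero, Function.comp]
  rw [Nat.add_comm]
  congr 1
  · simp

lemma occ_eq_zero {w x : List A} (h : w.length < x.length) : occ w x = 0 := by
  induction w with
  | nil =>
      apply occ_nil
      intro hx; subst hx; simp at h
  | cons b w ih =>
      rw [occ_cons, if_neg, ih (by simpa using Nat.lt_of_succ_lt h)]
      intro hpre
      have := hpre.length_le
      simp at this h
      omega

lemma prefix_congr {l u x : List A} (hl : l ≠ []) :
    (x <+: l ++ u) ↔ (x <+: l ++ u.take (x.length - 1)) := by
  rw [List.prefix_iff_eq_take, List.prefix_iff_eq_take]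
  have h1 : 1 ≤ l.length := List.length_pos_iff.mpr hl
  have : (l ++ u).take x.length = (l ++ u.take (x.length - 1)).take x.length := by
    rw [List.take_append, List.take_append]
    congr 1
    rw [List.take_take]
    congr 1
    omega
  rw [this]

lemma occL {u : List A} (w : List A) {x : List A} (hx : x ≠ []) :
    occ (w ++ u) x = occ (w ++ u.take (x.length - 1)) x + occ u x := by
  induction w with
  | nil =>
      simp only [List.nil_append]
      rw [occ_eq_zero (x := x) (w := u.take (x.length - 1)) ?_, Nat.zero_add]
      have : 1 ≤ x.length := List.length_pos_iff.mpr hx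
      calc (u.take (x.length - 1)).length ≤ x.length - 1 := by simp
        _ < x.length := by omega
  | cons b w ih =>
      rw [List.cons_append, List.cons_append, occ_cons, occ_cons, ih, Nat.add_assoc]
      congr 2
      rw [← List.cons_append, ← List.cons_append]
      rw [← prefix_congr (l := b :: w) (u := u) (x := x) (by simp)]

lemma occ_snoc (u : List A) (b : A) (y : List A) :
    occ (u ++ [b]) y = (if y <:+ u ++ [b] then 1 else 0) + occ u y := by
  induction u with
  | nil =>
      simp only [List.nil_append]
      rw [occ_cons]
      congr 1
      have : (y <+: [b]) ↔ (y <:+ [b]) := by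
        cases y with
        | nil => simp
        | cons a y => simp [List.cons_prefix_cons, List.suffix_cons_iff, List.suffix_nil,
            eq_comm, and_comm]
      simp [this]
  | cons c u ih =>
      rw [List.cons_append, occ_cons, ih, occ_cons]
      have h1 : (y <+: c :: (u ++ [b])) ↔ y = c :: (u ++ [b]) ∨ y <+: c :: u := by
        rw [show c :: (u ++ [b]) = (c :: u) ++ [b] from rfl]
        exact List.prefix_concat_iff
      have h2 : (y <:+ c :: (u ++ [b])) ↔ y = c :: (u ++ [b]) ∨ y <:+ u ++ [b] :=
        List.suffix_cons_iff
      by_cases hw : y = c :: (u ++ [b])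
      · have hna : ¬ (y <+: c :: u) := by
          intro h; have := h.length_le; simp [hw] at this
        have hnb : ¬ (y <:+ u ++ [b]) := by
          intro h; have := h.length_le; simp [hw] at this
        rw [if_pos (h1.mpr (Or.inl hw)), if_pos (h2.mpr (Or.inl hw)), if_neg hna, if_neg hnb]
      · simp only [h1, h2, hw, false_or]
        omega

lemma occ_reverse (w x : List A) : occ w.reverse x.reverse = occ w x := by
  induction w with
  | nil =>
      simp only [List.reverse_nil]
      rcases eq_or_ne x [] with h | h
      · simp [h]
      · rw [occ_nil _ (by simpa using h), occ_nil _ h]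
  | cons b w ih =>
      rw [List.reverse_cons, occ_snoc, ih, occ_cons, ← List.reverse_cons]
      simp only [List.reverse_suffix]

lemma occ_indicator {u x : List A} (hx : x ≠ []) {S : Finset A} (hS : u.toFinset ⊆ S) :
    occ u x = (∑ a ∈ S, occ u (a :: x)) + (if x <+: u then 1 else 0) := by
  induction u with
  | nil =>
      rw [occ_nil x hx, if_neg (by simp [List.prefix_nil, hx])]
      rw [Finset.sum_congr rfl (fun a _ => occ_nil (a :: x) (by simp))]
      simp
  | cons b u ih =>
      have hbS : b ∈ S := hS (by simp)
      have huS : u.toFinset ⊆ S := fun a ha => hS (by simp at ha ⊢; exact Or.inr ha)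
      rw [occ_cons, ih huS]
      have : ∀ a ∈ S, occ (b :: u) (a :: x) =
          (if a = b ∧ x <+: u then 1 else 0) + occ u (a :: x) := by
        intro a _
        rw [occ_cons]
        congr 1
        simp [List.cons_prefix_cons]
      rw [Finset.sum_congr rfl this, Finset.sum_add_distrib]
      have : (∑ a ∈ S, if a = b ∧ x <+: u then 1 else 0) = (if x <+: u then 1 else 0) := by
        rcases Classical.em (x <+: u) with h | h
        · simp only [h, and_true, if_pos]
          rw [Finset.sum_ite_eq' S b (fun _ => 1)]
          simp [hbS]
        · simp [h]
      rw [this]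
      have hcons : (x <+: b :: u) ↔ (x = []) ∨ (x <+: b :: u) := by tauto
      omega

lemma prefix_transfer {k : ℕ} {u v : List A} (h : KAbEq k u v) {y : List A}
    (hy : y.length < k) (hp : y <+: u) : y <+: v := by
  rcases eq_or_ne y [] with rfl | hne
  · exact List.nil_prefix
  · set S := u.toFinset ∪ v.toFinset with hs
    have e1 := occ_indicator hne (S := S) (Finset.subset_union_left)
    have e2 := occ_indicator hne (S := S) (Finset.subset_union_right)
    have exy : occ u y = occ v y := h y hne (le_of_lt hy)
    have exa : ∀ a ∈ S, occ u (a :: y) = occ v (a :: y) := fun a _ =>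
      h (a :: y) (by simp) (by simpa using hy)
    rw [Finset.sum_congr rfl exa] at e1
    rw [if_pos hp] at e1
    by_contra hnp
    rw [if_neg hnp] at e2
    omega

lemma take_eq_of_kab {k : ℕ} {u v : List A} (h : KAbEq k u v) (hsym : KAbEq k v u)
    {j : ℕ} (hj : j < k) : u.take j = v.take j := by
  have ha : u.take j <+: v := prefix_transfer h (lt_of_le_of_lt (by simp) hj) (List.take_prefix j u)
  have hb : v.take j <+: u := prefix_transfer hsym (lt_of_le_of_lt (by simp) hj) (List.take_prefix j v)
  have hab : u.take j <+: v.take j :=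
    List.prefix_take_iff.mpr ⟨ha, by simpa using List.length_take_le j u⟩
  have hba : v.take j <+: u.take j :=
    List.prefix_take_iff.mpr ⟨hb, by simpa using List.length_take_le j v⟩
  exact hab.sublist.eq_of_length (Nat.le_antisymm hab.length_le hba.length_le)

lemma KAbEq.rev {k : ℕ} {u v : List A} (h : KAbEq k u v) :
    KAbEq k u.reverse v.reverse := by
  intro x hx hlen
  have hx' : x.reverse ≠ [] := by simpa using hx
  rw [← List.reverse_reverse x, occ_reverse, occ_reverse]
  exact h x.reverse hx' (by simpa using hlen)

lemma occ_append_rev (w t : List A) {x : List A} (hx : x ≠ []) :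
    occ (w ++ t) x
      = occ (t.reverse ++ w.reverse.take (x.length - 1)) x.reverse + occ w x := by
  rw [← occ_reverse (w ++ t) x, List.reverse_append, occL t.reverse (by simpa using hx),
    show x.reverse.length = x.length from by simp, occ_reverse]

end Aux

theorem stmt2 {A : Type*} [DecidableEq A] (k : ℕ) (hk : 1 ≤ k)
    (u₁ u₂ v₁ v₂ : List A) (h₁ : KAbEq k u₁ v₁) (h₂ : KAbEq k u₂ v₂) :
    KAbEq k (u₁ ++ u₂) (v₁ ++ v₂) := by
  intro x hx hlen
  have hm : 1 ≤ x.length := List.length_pos_iff.mpr hx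
  have hmk : x.length - 1 < k := by omega
  have h₂' : KAbEq k v₂ u₂ := fun y hy hl => (h₂ y hy hl).symm
  have h₁' : KAbEq k v₁ u₁ := fun y hy hl => (h₁ y hy hl).symm
  rw [occL u₁ hx, occL v₁ hx, h₂ x hx hlen,
    take_eq_of_kab h₂ h₂' hmk]
  congr 1
  set t := v₂.take (x.length - 1) with ht
  rw [occ_append_rev u₁ t hx, occ_append_rev v₁ t hx,
    take_eq_of_kab h₁.rev h₁'.rev hmk, h₁ x hx hlen]
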